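/- arXiv:1405.3126 — 3 statements merged into one kernel-verified Lean document; each statement's English description precedes it below -/
import Mathlib

section
/- Let p̃ = (p̃_1, …, p̃_n) and p be design measures on the design points x_1, …, x_n ∈ ℝ^q such that H(p) is invertible, and let t ∈ [0,1). Then lim_{ε→0+} [(−tr{H((1−ε)p + εp̃)}⁻¹) − (−tr{H(p)}⁻¹)]/ε = Σ_{i=1}^n p̃_i (ψ_{Ai}(p) − tr{H(p)}⁻¹). -/
open Matrix BigOperators Finset

noncomputable section

/-- A design measure: nonnegative masses summing to 1. -/
def designMeasure {n : ℕ} (p : Fin n → ℝ) : Prop :=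
  (∀ i, 0 ≤ p i) ∧ ∑ i, p i = 1

/-- G(p) = Σ pᵢ xᵢ xᵢᵀ. -/
def Gmat {q n : ℕ} (x : Fin n → Fin q → ℝ) (p : Fin n → ℝ) : Matrix (Fin q) (Fin q) ℝ :=
  ∑ i, p i • Matrix.vecMulVec (x i) (x i)

/-- g(p) = Σ pᵢ xᵢ. -/
def gvec {q n : ℕ} (x : Fin n → Fin q → ℝ) (p : Fin n → ℝ) : Fin q → ℝ :=
  ∑ i, p i • x i

/-- H(p) = G(p) − t g(p) g(p)ᵀ. -/
def Hmat {q n : ℕ} (t : ℝ) (x : Fin n → Fin q → ℝ) (p : Fin n → ℝ) : Matrix (Fin q) (Fin q) ℝ :=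
  Gmat x p - t • Matrix.vecMulVec (gvec x p) (gvec x p)

/-- ψ_{Di}(p). -/
def psiD {q n : ℕ} (t : ℝ) (x : Fin n → Fin q → ℝ) (p : Fin n → ℝ) (i : Fin n) : ℝ :=
  (1 - t) * (x i ⬝ᵥ ((Hmat t x p)⁻¹ *ᵥ x i))
    + t * ((x i - gvec x p) ⬝ᵥ ((Hmat t x p)⁻¹ *ᵥ (x i - gvec x p)))

/-- ψ_{Ai}(p). -/
def psiA {q n : ℕ} (t : ℝ) (x : Fin n → Fin q → ℝ) (p : Fin n → ℝ) (i : Fin n) : ℝ :=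
  (1 - t) * (x i ⬝ᵥ (((Hmat t x p)⁻¹ * (Hmat t x p)⁻¹) *ᵥ x i))
    + t * ((x i - gvec x p) ⬝ᵥ (((Hmat t x p)⁻¹ * (Hmat t x p)⁻¹) *ᵥ (x i - gvec x p)))

end

/-!
Along the segment `p_ε = (1 - ε) p + ε p̃` the matrix `H(p_ε)` is a quadratic polynomial in `ε`.
Since `∑ p̃ᵢ = 1`, its linear coefficient is `∑ p̃ᵢ Kᵢ - H(p)`, where
`Kᵢ = (1 - t) xᵢ xᵢᵀ + t (xᵢ - g(p)) (xᵢ - g(p))ᵀ`. Differentiating the inverse, the derivative of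
`-tr H(p_ε)⁻¹` at `0` is `tr (H⁻¹ (∑ p̃ᵢ Kᵢ - H) H⁻¹)`, and cyclicity of the trace turns this into
`∑ p̃ᵢ (tr (H⁻² Kᵢ) - tr H⁻¹) = ∑ p̃ᵢ (ψ_{Ai} - tr H⁻¹)`.
-/

section MatrixCalculus

-- The operator norm only serves the proofs: `HasDerivAt` depends on the topology alone.
open scoped Matrix.Norms.Operator

variable {𝕜 m : Type*} [RCLike 𝕜] [Fintype m] {f : 𝕜 → Matrix m m 𝕜} {f' : Matrix m m 𝕜} {s : 𝕜}

theorem HasDerivAt.matrix_inv [DecidableEq m] (hf : HasDerivAt f f' s) (hdet : IsUnit (f s).det) :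
    HasDerivAt (fun ε => (f ε)⁻¹) (-((f s)⁻¹ * f' * (f s)⁻¹)) s := by
  obtain ⟨u, hu⟩ := (isUnit_iff_isUnit_det _).2 hdet
  have h := hasFDerivAt_ringInverse (𝕜 := 𝕜) u
  rw [hu] at h
  have := h.comp_hasDerivAt s hf
  simp only [Function.comp_def, ← nonsing_inv_eq_ringInverse, coe_units_inv, hu,
    _root_.neg_apply, ContinuousLinearMap.mulLeftRight_apply] at this
  exact this

theorem HasDerivAt.matrix_trace (hf : HasDerivAt f f' s) :
    HasDerivAt (fun ε => trace (f ε)) (trace f') s :=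
  (traceLinearMap m 𝕜 𝕜).toContinuousLinearMap.hasFDerivAt.comp_hasDerivAt s hf

theorem hasDerivAt_quadratic (a b c : Matrix m m 𝕜) :
    HasDerivAt (fun ε : 𝕜 => a + ε • b + ε ^ 2 • c) (b + (2 * s) • c) s := by
  have := (((hasDerivAt_id s).smul_const b).const_add a).add ((hasDerivAt_pow 2 s).smul_const c)
  exact this.congr_deriv (by simp)

theorem hasDerivAt_trace_inv_quadratic [DecidableEq m] (a b c : Matrix m m 𝕜)
    (ha : IsUnit a.det) :
    HasDerivAt (fun ε : 𝕜 => trace (a + ε • b + ε ^ 2 • c)⁻¹) (-trace (a⁻¹ * b * a⁻¹)) 0 := by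
  have := ((hasDerivAt_quadratic a b c (s := 0)).matrix_inv (by simpa using ha)).matrix_trace
  simpa using this

end MatrixCalculus

theorem trace_inv_mul_sum_smul_sub_mul_inv {R ι m : Type*} [CommRing R] [Fintype ι] [Fintype m]
    [DecidableEq m] {A : Matrix m m R} (hA : IsUnit A.det) (K : ι → Matrix m m R) {r : ι → R}
    (hr : ∑ i, r i = 1) :
    trace (A⁻¹ * (∑ i, r i • K i - A) * A⁻¹)
      = ∑ i, r i * (trace (A⁻¹ * A⁻¹ * K i) - trace A⁻¹) := by
  rw [trace_mul_cycle, Matrix.mul_sub, Matrix.mul_assoc A⁻¹ A⁻¹ A, nonsing_inv_mul _ hA,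
    Matrix.mul_one, trace_sub, Matrix.mul_sum, trace_sum]
  simp only [Matrix.mul_smul, trace_smul, smul_eq_mul, mul_sub, sum_sub_distrib, ← sum_mul, hr,
    one_mul]

section DesignMatrices

variable {q n : ℕ} (t : ℝ) (x : Fin n → Fin q → ℝ)

def Kmat (p : Fin n → ℝ) (i : Fin n) : Matrix (Fin q) (Fin q) ℝ :=
  (1 - t) • vecMulVec (x i) (x i) + t • vecMulVec (x i - gvec x p) (x i - gvec x p)

lemma psiA_eq_trace_mul_Kmat (p : Fin n → ℝ) (i : Fin n) :
    psiA t x p i = trace ((Hmat t x p)⁻¹ * (Hmat t x p)⁻¹ * Kmat t x p i) := by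
  simp only [psiA, Kmat, Matrix.mul_add, Matrix.mul_smul, trace_add, trace_smul, mul_vecMulVec,
    trace_vecMulVec, dotProduct_comm _ (x i), dotProduct_comm _ (x i - gvec x p), smul_eq_mul]

lemma Gmat_add (p r : Fin n → ℝ) :
    Gmat x (p + r) = Gmat x p + Gmat x r := by
  simp only [Gmat, Pi.add_apply, add_smul, sum_add_distrib]

lemma Gmat_smul (c : ℝ) (p : Fin n → ℝ) :
    Gmat x (c • p) = c • Gmat x p := by
  simp only [Gmat, Pi.smul_apply, smul_eq_mul, mul_smul, smul_sum]

lemma gvec_add (p r : Fin n → ℝ) :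
    gvec x (p + r) = gvec x p + gvec x r := by
  simp only [gvec, Pi.add_apply, add_smul, sum_add_distrib]

lemma gvec_smul (c : ℝ) (p : Fin n → ℝ) :
    gvec x (c • p) = c • gvec x p := by
  simp only [gvec, Pi.smul_apply, smul_eq_mul, mul_smul, smul_sum]

lemma vecMulVec_gvec_left (r : Fin n → ℝ) (v : Fin q → ℝ) :
    vecMulVec (gvec x r) v = ∑ i, r i • vecMulVec (x i) v := by
  ext j k
  simp [vecMulVec_apply, gvec, Finset.sum_apply, Matrix.sum_apply, sum_mul, mul_assoc]

lemma vecMulVec_gvec_right (r : Fin n → ℝ) (v : Fin q → ℝ) :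
    vecMulVec v (gvec x r) = ∑ i, r i • vecMulVec v (x i) := by
  ext j k
  simp [vecMulVec_apply, gvec, Finset.sum_apply, Matrix.sum_apply, mul_sum, mul_left_comm]

lemma sum_smul_Kmat (p r : Fin n → ℝ) (hr : ∑ i, r i = 1) :
    ∑ i, r i • Kmat t x p i = Gmat x r
      - t • (vecMulVec (gvec x p) (gvec x r) + vecMulVec (gvec x r) (gvec x p)
          - vecMulVec (gvec x p) (gvec x p)) := by
  set g := gvec x p
  have hK : ∀ i, Kmat t x p i = vecMulVec (x i) (x i)
      - t • (vecMulVec g (x i) + vecMulVec (x i) g - vecMulVec g g) := by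
    intro i
    simp only [Kmat, sub_vecMulVec, vecMulVec_sub]
    module
  simp only [hK, smul_sub, smul_add, sum_sub_distrib, sum_add_distrib, smul_comm (r _) t,
    ← smul_sum, ← sum_smul, hr, one_smul, vecMulVec_gvec_left, vecMulVec_gvec_right, Gmat]

lemma Hmat_segment (p r : Fin n → ℝ) (hr : ∑ i, r i = 1) (ε : ℝ) :
    Hmat t x ((1 - ε) • p + ε • r) = Hmat t x p + ε • (∑ i, r i • Kmat t x p i - Hmat t x p)
      + ε ^ 2 • (-t • vecMulVec (gvec x r - gvec x p) (gvec x r - gvec x p)) := by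
  rw [sum_smul_Kmat t x p r hr]
  simp only [Hmat, Gmat_add, Gmat_smul, gvec_add, gvec_smul, add_vecMulVec, vecMulVec_add,
    smul_vecMulVec, vecMulVec_smul, sub_vecMulVec, vecMulVec_sub]
  module

end DesignMatrices

theorem statement_4_general {q n : ℕ}
    (x : Fin n → Fin q → ℝ) (t : ℝ)
    (p ptilde : Fin n → ℝ) (hpt : designMeasure ptilde)
    (hHp : IsUnit (Hmat t x p).det) :
    Filter.Tendsto
      (fun ε : ℝ =>
        ((-Matrix.trace ((Hmat t x ((1 - ε) • p + ε • ptilde))⁻¹))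
          - (-Matrix.trace ((Hmat t x p)⁻¹))) / ε)
      (nhdsWithin 0 (Set.Ioi 0))
      (nhds (∑ i, ptilde i * (psiA t x p i - Matrix.trace ((Hmat t x p)⁻¹)))) := by
  have hderiv : HasDerivAt (fun ε : ℝ => -trace (Hmat t x ((1 - ε) • p + ε • ptilde))⁻¹)
      (∑ i, ptilde i * (psiA t x p i - trace (Hmat t x p)⁻¹)) 0 := by
    simp only [Hmat_segment t x p ptilde hpt.2]
    refine (hasDerivAt_trace_inv_quadratic _ _ _ hHp).neg.congr_deriv ?_
    simp only [neg_neg, trace_inv_mul_sum_smul_sub_mul_inv hHp _ hpt.2, psiA_eq_trace_mul_Kmat]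
  simpa [div_eq_inv_mul] using hderiv.tendsto_slope_zero_right

theorem statement_4 {q n : ℕ} (hq : 1 ≤ q) (hn : 1 ≤ n)
    (x : Fin n → Fin q → ℝ) (t : ℝ) (ht0 : 0 ≤ t) (ht1 : t < 1)
    (p ptilde : Fin n → ℝ) (hp : designMeasure p) (hpt : designMeasure ptilde)
    (hHp : IsUnit (Hmat t x p).det) :
    Filter.Tendsto
      (fun ε : ℝ =>
        ((-Matrix.trace ((Hmat t x ((1 - ε) • p + ε • ptilde))⁻¹))
          - (-Matrix.trace ((Hmat t x p)⁻¹))) / ε)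
      (nhdsWithin 0 (Set.Ioi 0))
      (nhds (∑ i, ptilde i * (psiA t x p i - Matrix.trace ((Hmat t x p)⁻¹)))) :=
  statement_4_general x t p ptilde hpt hHp
end

section
/- Let t ∈ [0,1), let δ > 0, and let p̂ be a design measure on the design points x_1, …, x_n ∈ ℝ^q with H(p̂) invertible. If ψ_{Ai}(p̂) − tr{H(p̂)}⁻¹ ≤ δ for every i with 1 ≤ i ≤ n, then −tr{H(p̂)}⁻¹ ≥ −tr{H(p)}⁻¹ − δ for every design measure p with H(p) invertible. -/
/-!
Since `X ↦ tr X⁻¹` is convex, `tr H(p)⁻¹` lies above the tangent at `Â = H(p̂)`: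
`tr H(p)⁻¹ ≥ 2 tr Â⁻¹ - tr (Â⁻² H(p))`. Averaging `ψ_{Ai}(p̂)` with the weights `p i` gives
`tr (Â⁻² H(p)) + t ‖Â⁻¹ (g(p) - g(p̂))‖² ≥ tr (Â⁻² H(p))`, and by hypothesis this average is at most
`tr Â⁻¹ + δ`.
-/

open Matrix BigOperators Finset

open Matrix

/-- Tangent-line inequality for the convex map `X ↦ tr X⁻¹` at `X = C⁻¹`, in a form that does not
need `C` to be invertible. -/
theorem Matrix.two_mul_trace_sub_trace_mul_mul_le_trace_inv {ι : Type*} [Fintype ι]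
    [DecidableEq ι] {B C : Matrix ι ι ℝ} (hB : B.PosSemidef) (hBdet : IsUnit B.det)
    (hC : C.IsHermitian) :
    2 * trace C - trace (C * B * C) ≤ trace B⁻¹ := by
  have hD : (B⁻¹ - C)ᴴ = B⁻¹ - C := (hB.isHermitian.inv.sub hC).eq
  have hexpand : (B⁻¹ - C) * B * (B⁻¹ - C)ᴴ = B⁻¹ - C - C + C * B * C := by
    rw [hD]
    simp only [sub_mul, mul_sub, mul_assoc, nonsing_inv_mul B hBdet, mul_nonsing_inv B hBdet,
      mul_one, one_mul]
    abel
  have := (hB.mul_mul_conjTranspose_same (B⁻¹ - C)).trace_nonneg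
  rw [hexpand, trace_add, trace_sub, trace_sub] at this
  linarith

theorem designMeasure.sum_mul_le {n : ℕ} {p : Fin n → ℝ} (hp : designMeasure p) {f : Fin n → ℝ}
    {c : ℝ} (hf : ∀ k, f k ≤ c) : ∑ k, p k * f k ≤ c :=
  calc ∑ k, p k * f k ≤ ∑ k, p k * c :=
        Finset.sum_le_sum fun k _ => mul_le_mul_of_nonneg_left (hf k) (hp.1 k)
    _ = c := by rw [← Finset.sum_mul, hp.2, one_mul]

theorem designMeasure.sq_sum_mul_le {n : ℕ} {p : Fin n → ℝ} (hp : designMeasure p)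
    (a : Fin n → ℝ) :
    (∑ k, p k * a k) ^ 2 ≤ ∑ k, p k * a k ^ 2 :=
  (even_two.convexOn_pow).map_sum_le (fun k _ => hp.1 k) hp.2 (fun _ _ => Set.mem_univ _)

section Design

variable {q n : ℕ} (t : ℝ) (x : Fin n → Fin q → ℝ) (p : Fin n → ℝ)

theorem gvec_dotProduct (w : Fin q → ℝ) : gvec x p ⬝ᵥ w = ∑ k, p k * (x k ⬝ᵥ w) := by
  simp [gvec, sum_dotProduct]

theorem dotProduct_mulVec_gvec (M : Matrix (Fin q) (Fin q) ℝ) (u : Fin q → ℝ) :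
    u ⬝ᵥ M *ᵥ gvec x p = ∑ k, p k * (u ⬝ᵥ M *ᵥ x k) := by
  simp [gvec, mulVec_sum, mulVec_smul, dotProduct_sum]

theorem dotProduct_mulVec_Hmat (u w : Fin q → ℝ) :
    u ⬝ᵥ Hmat t x p *ᵥ w
      = ∑ k, p k * ((u ⬝ᵥ x k) * (x k ⬝ᵥ w)) - t * ((u ⬝ᵥ gvec x p) * (gvec x p ⬝ᵥ w)) := by
  simp [Hmat, Gmat, sub_mulVec, sum_mulVec, smul_mulVec, vecMulVec_mulVec, dotProduct_sum,
    mul_comm]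

theorem trace_mul_Hmat (M : Matrix (Fin q) (Fin q) ℝ) :
    trace (M * Hmat t x p)
      = ∑ k, p k * (x k ⬝ᵥ M *ᵥ x k) - t * (gvec x p ⬝ᵥ M *ᵥ gvec x p) := by
  simp [Hmat, Gmat, mul_sub, Finset.mul_sum, mul_vecMulVec, trace_sum, dotProduct_comm]

theorem Hmat_isHermitian : (Hmat t x p).IsHermitian := by
  ext i j
  simp [Hmat, Gmat, vecMulVec_apply, Matrix.sum_apply, mul_comm]

theorem Hmat_posSemidef (hp : designMeasure p) (ht : t ≤ 1) :
    (Hmat t x p).PosSemidef := by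
  refine .of_dotProduct_mulVec_nonneg (Hmat_isHermitian t x p) fun v => ?_
  have hjensen : (v ⬝ᵥ gvec x p) ^ 2 ≤ ∑ k, p k * (v ⬝ᵥ x k) ^ 2 := by
    simpa only [dotProduct_comm v, gvec_dotProduct] using hp.sq_sum_mul_le fun k => v ⬝ᵥ x k
  have hquad : star v ⬝ᵥ Hmat t x p *ᵥ v
      = ∑ k, p k * (v ⬝ᵥ x k) ^ 2 - t * (v ⬝ᵥ gvec x p) ^ 2 := by
    simp only [star_trivial, dotProduct_mulVec_Hmat, dotProduct_comm _ v, sq]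
  have hscale := mul_le_mul_of_nonneg_right ht (sq_nonneg (v ⬝ᵥ gvec x p))
  rw [hquad]
  linarith

theorem sum_mul_quadratic_eq_trace_mul_Hmat_add (hp : ∑ k, p k = 1)
    (M : Matrix (Fin q) (Fin q) ℝ) (c : Fin q → ℝ) :
    ∑ k, p k * ((1 - t) * (x k ⬝ᵥ M *ᵥ x k) + t * ((x k - c) ⬝ᵥ M *ᵥ (x k - c)))
      = trace (M * Hmat t x p) + t * ((gvec x p - c) ⬝ᵥ M *ᵥ (gvec x p - c)) := by
  have hterm : ∀ u, (1 - t) * (u ⬝ᵥ M *ᵥ u) + t * ((u - c) ⬝ᵥ M *ᵥ (u - c))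
      = u ⬝ᵥ M *ᵥ u - t * (u ⬝ᵥ M *ᵥ c) - t * (c ⬝ᵥ M *ᵥ u) + t * (c ⬝ᵥ M *ᵥ c) := by
    intro u
    simp only [mulVec_sub, dotProduct_sub, sub_dotProduct]
    ring
  simp only [hterm]
  simp only [trace_mul_Hmat, mulVec_sub, dotProduct_sub, sub_dotProduct,
    gvec_dotProduct, dotProduct_mulVec_gvec, mul_add, mul_sub, Finset.sum_add_distrib,
    Finset.sum_sub_distrib, mul_left_comm _ t, ← Finset.mul_sum, ← Finset.sum_mul, hp]
  ring

end Design

theorem statement_8_general {q n : ℕ}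
    (x : Fin n → Fin q → ℝ) (t : ℝ) (ht0 : 0 ≤ t) (ht1 : t < 1)
    (δ : ℝ)
    (phat : Fin n → ℝ)
    (hψ : ∀ i, psiA t x phat i - Matrix.trace ((Hmat t x phat)⁻¹) ≤ δ) :
    ∀ p : Fin n → ℝ, designMeasure p → IsUnit (Hmat t x p).det →
      -Matrix.trace ((Hmat t x phat)⁻¹) ≥ -Matrix.trace ((Hmat t x p)⁻¹) - δ := by
  intro p hp hHp
  set A := Hmat t x phat
  have hAinv : A⁻¹.IsHermitian := (Hmat_isHermitian t x phat).inv
  have hM : (A⁻¹ * A⁻¹).PosSemidef := by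
    simpa only [hAinv.eq] using posSemidef_conjTranspose_mul_self A⁻¹
  have htangent := two_mul_trace_sub_trace_mul_mul_le_trace_inv
    (Hmat_posSemidef t x p hp ht1.le) hHp hAinv
  have hsum : ∑ k, p k * psiA t x phat k
      = trace (A⁻¹ * A⁻¹ * Hmat t x p)
        + t * ((gvec x p - gvec x phat) ⬝ᵥ (A⁻¹ * A⁻¹) *ᵥ (gvec x p - gvec x phat)) :=
    sum_mul_quadratic_eq_trace_mul_Hmat_add t x p hp.2 _ _
  have hbound : ∑ k, p k * psiA t x phat k ≤ trace A⁻¹ + δ :=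
    hp.sum_mul_le fun k => by linarith [hψ k]
  have hgap := mul_nonneg ht0 (hM.dotProduct_mulVec_nonneg (gvec x p - gvec x phat))
  rw [star_trivial] at hgap
  rw [trace_mul_cycle] at htangent
  linarith

theorem statement_8 {q n : ℕ} (hq : 1 ≤ q) (hn : 1 ≤ n)
    (x : Fin n → Fin q → ℝ) (t : ℝ) (ht0 : 0 ≤ t) (ht1 : t < 1)
    (δ : ℝ) (hδ : 0 < δ)
    (phat : Fin n → ℝ) (hphat : designMeasure phat)
    (hHphat : IsUnit (Hmat t x phat).det)
    (hψ : ∀ i, psiA t x phat i - Matrix.trace ((Hmat t x phat)⁻¹) ≤ δ) :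
    ∀ p : Fin n → ℝ, designMeasure p → IsUnit (Hmat t x p).det →
      -Matrix.trace ((Hmat t x phat)⁻¹) ≥ -Matrix.trace ((Hmat t x p)⁻¹) - δ :=
  statement_8_general x t ht0 ht1 δ phat hψ
end

section
/- Let q = 2m + 1 with m ≥ 1 an integer, let Ω be the set of all nonzero vectors in {0,1}^q, and fix t ∈ [0,1). Let p_odd assign mass n_{m+1}⁻¹ to each point of Ω_{m+1} and mass 0 elsewhere. Then g(p_odd) = {(m+1)/(2m+1)}·1_q, H(p_odd) is invertible, and {H(p_odd)}⁻¹ = [2(2m+1)/(m+1)]·{I_q − q⁻¹J_q + [1/(2(m+1)(1−t))]·q⁻¹J_q}, where 1_q is the q×1 vector of ones, I_q the identity matrix of order q, and J_q = 1_q1_qᵀ. -/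
open Matrix BigOperators Finset

noncomputable section

/-- The binary design point (0/1 vector) with support `S`. -/
def ind {q : ℕ} (S : Finset (Fin q)) : Fin q → ℝ := fun i => if i ∈ S then 1 else 0

/-- A design measure on the nonzero binary vectors of length `q`, indexed by
their supports: nonnegative masses summing to 1, with zero mass on the zero vector. -/
def designMeasureB {q : ℕ} (p : Finset (Fin q) → ℝ) : Prop :=
  p ∅ = 0 ∧ (∀ S, 0 ≤ p S) ∧ ∑ S : Finset (Fin q), p S = 1

/-- G(p) = Σ p_x x xᵀ. -/
def GmatB {q : ℕ} (p : Finset (Fin q) → ℝ) : Matrix (Fin q) (Fin q) ℝ :=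
  ∑ S : Finset (Fin q), p S • Matrix.vecMulVec (ind S) (ind S)

/-- g(p) = Σ p_x x. -/
def gvecB {q : ℕ} (p : Finset (Fin q) → ℝ) : Fin q → ℝ :=
  ∑ S : Finset (Fin q), p S • ind S

/-- H(p) = G(p) − t g(p) g(p)ᵀ. -/
def HmatB {q : ℕ} (t : ℝ) (p : Finset (Fin q) → ℝ) : Matrix (Fin q) (Fin q) ℝ :=
  GmatB p - t • Matrix.vecMulVec (gvecB p) (gvecB p)

/-- The all-ones q×q matrix J_q. -/
def Jmat (q : ℕ) : Matrix (Fin q) (Fin q) ℝ := Matrix.of fun _ _ => 1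

end

/-! For the uniform design on the `k`-subsets of `Fin q`, counting the `k`-subsets that contain
a given point or pair gives `g = (k/q) 1` and
`G = k(q-k)/(q(q-1)) (I - q⁻¹J) + (k²/q) q⁻¹J`, while `g gᵀ = (k²/q) q⁻¹J`.
So `H` is a combination of the complementary idempotents `I - q⁻¹J` and `q⁻¹J`, and is
inverted by inverting the two coefficients; for `q = 2m+1`, `k = m+1` they are `(m+1)/(2q)` and
`(1-t)(m+1)²/q`. -/

theorem choose_sub_one_div_choose {q k : ℕ} (hk : 1 ≤ k) (hkq : k ≤ q) :
    ((q - 1).choose (k - 1) : ℝ) / q.choose k = k / q := by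
  obtain ⟨n, rfl⟩ : ∃ n, q = n + 1 := ⟨q - 1, by omega⟩
  obtain ⟨j, rfl⟩ : ∃ j, k = j + 1 := ⟨k - 1, by omega⟩
  have hpos : (0 : ℝ) < (n + 1).choose (j + 1) := by exact_mod_cast Nat.choose_pos hkq
  have key : ((n + 1 : ℕ) : ℝ) * n.choose j = (n + 1).choose (j + 1) * (j + 1 : ℕ) := by
    exact_mod_cast Nat.add_one_mul_choose_eq n j
  simp only [Nat.add_sub_cancel]
  rw [div_eq_div_iff hpos.ne' (by positivity)]
  push_cast at key ⊢
  linarith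

theorem choose_sub_two_div_choose {q k : ℕ} (hk : 2 ≤ k) (hkq : k ≤ q) :
    ((q - 2).choose (k - 2) : ℝ) / q.choose k = k * (k - 1) / (q * (q - 1)) := by
  have hpos : (0 : ℝ) < (q - 1).choose (k - 1) := by
    exact_mod_cast Nat.choose_pos (by omega)
  have outer := choose_sub_one_div_choose (by omega : 1 ≤ k) hkq
  have inner := choose_sub_one_div_choose (by omega : 1 ≤ k - 1) (by omega : k - 1 ≤ q - 1)
  rw [show q - 1 - 1 = q - 2 by omega, show k - 1 - 1 = k - 2 by omega,
    Nat.cast_sub (by omega : 1 ≤ k), Nat.cast_sub (by omega : 1 ≤ q), Nat.cast_one] at inner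
  rw [← div_mul_div_cancel₀ hpos.ne', inner, outer, div_mul_div_comm, mul_comm ((k : ℝ) - 1),
    mul_comm ((q : ℝ) - 1)]

theorem IsIdempotentElem.smul_one_sub_add_smul_mul_inv {𝕜 A : Type*} [Field 𝕜] [Ring A]
    [Algebra 𝕜 A] {e : A} (he : IsIdempotentElem e) {a b : 𝕜} (ha : a ≠ 0) (hb : b ≠ 0) :
    (a • (1 - e) + b • e) * (a⁻¹ • (1 - e) + b⁻¹ • e) = 1 := by
  simp only [mul_add, add_mul, smul_mul_smul_comm, he.one_sub.eq, he.eq, he.mul_one_sub_self,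
    he.one_sub_mul_self, smul_zero, add_zero, zero_add, mul_inv_cancel₀ ha, mul_inv_cancel₀ hb,
    one_smul, sub_add_cancel]

noncomputable def meanProj (q : ℕ) : Matrix (Fin q) (Fin q) ℝ := (q : ℝ)⁻¹ • Jmat q

@[simp]
theorem meanProj_apply {q : ℕ} (i j : Fin q) : meanProj q i j = (q : ℝ)⁻¹ := by
  simp [meanProj, Jmat]

theorem isIdempotentElem_meanProj {q : ℕ} (hq : q ≠ 0) : IsIdempotentElem (meanProj q) := by
  ext i j
  simp only [Matrix.mul_apply, meanProj_apply, sum_const, card_univ, Fintype.card_fin,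
    nsmul_eq_mul]
  field_simp

theorem gvecB_apply {q : ℕ} (p : Finset (Fin q) → ℝ) (i : Fin q) :
    gvecB p i = ∑ S with i ∈ S, p S := by
  simp [gvecB, ind, Finset.sum_filter]

theorem GmatB_apply {q : ℕ} (p : Finset (Fin q) → ℝ) (i j : Fin q) :
    GmatB p i j = ∑ S with {i, j} ⊆ S, p S := by
  simp [GmatB, ind, Finset.sum_filter, Matrix.sum_apply, Matrix.vecMulVec_apply, ← ite_and,
    Finset.insert_subset_iff, and_comm]

noncomputable def uniformDesign (q k : ℕ) : Finset (Fin q) → ℝ :=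
  fun S => if S.card = k then ((q.choose k : ℝ))⁻¹ else 0

theorem sum_uniformDesign_of_subset {q k : ℕ} {T : Finset (Fin q)} (hT : #T ≤ k) :
    ∑ S with T ⊆ S, uniformDesign q k S = ((q - #T).choose (k - #T) : ℝ) / q.choose k := by
  have hcount := card_filter_powersetCard_subset T univ k (subset_univ T) hT
  rw [card_univ, Fintype.card_fin, powersetCard_eq_filter, powerset_univ, filter_filter] at hcount
  simp only [uniformDesign]
  rw [← Finset.sum_filter, filter_filter, sum_const, ← hcount, nsmul_eq_mul, div_eq_mul_inv]
  simp_rw [and_comm]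

theorem gvecB_uniformDesign {q k : ℕ} (hk : 1 ≤ k) (hkq : k ≤ q) :
    gvecB (uniformDesign q k) = fun _ => (k : ℝ) / q := by
  funext i
  have hsub : #({i} : Finset (Fin q)) ≤ k := by simpa using hk
  simpa [gvecB_apply, choose_sub_one_div_choose hk hkq] using sum_uniformDesign_of_subset hsub

theorem GmatB_uniformDesign {q k : ℕ} (hk : 2 ≤ k) (hkq : k ≤ q) :
    GmatB (uniformDesign q k)
      = (k * (q - k) / (q * (q - 1)) : ℝ) • (1 - meanProj q)
        + ((k : ℝ) ^ 2 / q) • meanProj q := by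
  ext i j
  have hq : (q : ℝ) ≠ 0 := by norm_cast; omega
  have hq1 : (q : ℝ) - 1 ≠ 0 := by
    rw [sub_ne_zero]; norm_cast; omega
  rw [GmatB_apply, sum_uniformDesign_of_subset (card_le_two.trans hk)]
  rcases eq_or_ne i j with rfl | hij
  · simp only [insert_eq_of_mem (mem_singleton_self i), card_singleton,
      choose_sub_one_div_choose (by omega : 1 ≤ k) hkq, Matrix.add_apply, Matrix.smul_apply,
      Matrix.sub_apply, one_apply_eq, meanProj_apply, smul_eq_mul]
    field_simp
    ring
  · simp only [card_pair hij, choose_sub_two_div_choose hk hkq, Matrix.add_apply,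
      Matrix.smul_apply, Matrix.sub_apply, one_apply_ne hij, meanProj_apply, smul_eq_mul]
    field_simp
    ring

theorem HmatB_uniformDesign (t : ℝ) {q k : ℕ} (hk : 2 ≤ k) (hkq : k ≤ q) :
    HmatB t (uniformDesign q k)
      = (k * (q - k) / (q * (q - 1)) : ℝ) • (1 - meanProj q)
        + ((1 - t) * k ^ 2 / q) • meanProj q := by
  have hq : (q : ℝ) ≠ 0 := by norm_cast; omega
  have hgg : vecMulVec (fun _ : Fin q => (k : ℝ) / q) (fun _ => (k : ℝ) / q)
      = ((k : ℝ) ^ 2 / q) • meanProj q := by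
    ext i j
    simp only [vecMulVec_apply, Matrix.smul_apply, meanProj_apply, smul_eq_mul]
    field_simp
  rw [HmatB, GmatB_uniformDesign hk hkq, gvecB_uniformDesign (by omega) hkq, hgg]
  module

theorem statement_17_general (m : ℕ) (hm : 1 ≤ m) (t : ℝ) (ht1 : t < 1) :
    gvecB (fun S : Finset (Fin (2*m+1)) =>
        if S.card = m + 1 then ((Nat.choose (2*m+1) (m+1) : ℝ))⁻¹ else 0)
      = (fun _ => ((m : ℝ) + 1) / (2*(m : ℝ) + 1))
    ∧ IsUnit (HmatB t (fun S : Finset (Fin (2*m+1)) =>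
        if S.card = m + 1 then ((Nat.choose (2*m+1) (m+1) : ℝ))⁻¹ else 0)).det
    ∧ (HmatB t (fun S : Finset (Fin (2*m+1)) =>
        if S.card = m + 1 then ((Nat.choose (2*m+1) (m+1) : ℝ))⁻¹ else 0))⁻¹
      = (2*(2*(m : ℝ)+1)/((m : ℝ)+1)) •
          ((1 : Matrix (Fin (2*m+1)) (Fin (2*m+1)) ℝ) - ((2*m+1 : ℝ))⁻¹ • Jmat (2*m+1)
            + (1/(2*((m : ℝ)+1)*(1-t))) • (((2*m+1 : ℝ))⁻¹ • Jmat (2*m+1))) := by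
  change gvecB (uniformDesign (2*m+1) (m+1)) = _ ∧ IsUnit (HmatB t (uniformDesign _ _)).det
    ∧ (HmatB t (uniformDesign _ _))⁻¹ = _
  have h1t : 1 - t ≠ 0 := by linarith
  set P := meanProj (2*m+1)
  have hH : HmatB t (uniformDesign (2*m+1) (m+1))
      = ((m + 1) / (2 * (2 * m + 1)) : ℝ) • (1 - P)
        + ((1 - t) * (m + 1) ^ 2 / (2 * m + 1) : ℝ) • P := by
    rw [HmatB_uniformDesign t (by omega) (by omega)]
    push_cast
    congr 2
    field_simp
    ring
  have hright := hH ▸ (isIdempotentElem_meanProj (by omega)).smul_one_sub_add_smul_mul_inv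
    (by positivity) (div_ne_zero (mul_ne_zero h1t (by positivity)) (by positivity))
  refine ⟨?_, isUnit_det_of_right_inverse hright, (inv_eq_right_inv hright).trans ?_⟩
  · rw [gvecB_uniformDesign (by omega) (by omega)]
    push_cast
    rfl
  · have hmean : ((2*m+1 : ℝ))⁻¹ • Jmat (2*m+1) = P := by simp [P, meanProj]
    rw [hmean, smul_add, smul_smul]
    congr 2
    · field_simp
    · field_simp

theorem statement_17 (m : ℕ) (hm : 1 ≤ m) (t : ℝ) (ht0 : 0 ≤ t) (ht1 : t < 1) :
    gvecB (fun S : Finset (Fin (2*m+1)) =>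
        if S.card = m + 1 then ((Nat.choose (2*m+1) (m+1) : ℝ))⁻¹ else 0)
      = (fun _ => ((m : ℝ) + 1) / (2*(m : ℝ) + 1))
    ∧ IsUnit (HmatB t (fun S : Finset (Fin (2*m+1)) =>
        if S.card = m + 1 then ((Nat.choose (2*m+1) (m+1) : ℝ))⁻¹ else 0)).det
    ∧ (HmatB t (fun S : Finset (Fin (2*m+1)) =>
        if S.card = m + 1 then ((Nat.choose (2*m+1) (m+1) : ℝ))⁻¹ else 0))⁻¹
      = (2*(2*(m : ℝ)+1)/((m : ℝ)+1)) •
          ((1 : Matrix (Fin (2*m+1)) (Fin (2*m+1)) ℝ) - ((2*m+1 : ℝ))⁻¹ • Jmat (2*m+1)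
            + (1/(2*((m : ℝ)+1)*(1-t))) • (((2*m+1 : ℝ))⁻¹ • Jmat (2*m+1))) :=
  statement_17_general m hm t ht1
end
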